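/- arXiv:1804.02273 — 4 statements merged into one kernel-verified Lean document; each statement's English description precedes it below -/
import Mathlib

section
/- Let G be a connected graph on {1,...,n} that is BFS-enumerated. In the BFS tree (where the parent of each vertex j ≥ 2 is its minimal-index neighbor), define the subtree weight w(v) as the number of descendants of v including v itself. Then there exists a graph G' isomorphic to G that is BFS-enumerated and such that for every vertex v, the subtree weights of the children of v, listed in increasing order of labels, form a non-increasing sequence. -/
open Classical in
/-- Minimal-label neighbor (BFS parent) of `j`; `j` itself otherwise. -/
noncomputable def parent {n : ℕ} (G : SimpleGraph (Fin n)) (j : Fin n) : Fin n :=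
  if h : 0 < j.val ∧ {m : ℕ | ∃ i : Fin n, i.val = m ∧ G.Adj i j}.Nonempty
  then ⟨sInf {m : ℕ | ∃ i : Fin n, i.val = m ∧ G.Adj i j}, by
    obtain ⟨i, hi, -⟩ := Nat.sInf_mem h.2
    exact hi ▸ i.isLt⟩
  else j

/-- The identity labeling of `G` is a valid BFS order starting at vertex `0`. -/
def IsBFSEnum {n : ℕ} (G : SimpleGraph (Fin n)) : Prop :=
  (∀ j : Fin n, 0 < j.val → parent G j < j) ∧
  (∀ i j : Fin n, 0 < i.val → i ≤ j → parent G i ≤ parent G j)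

/-- `u` is a descendant of `v` (including `v` itself) in the BFS tree. -/
def Descend {n : ℕ} (G : SimpleGraph (Fin n)) (v u : Fin n) : Prop :=
  ∃ k : ℕ, (parent G)^[k] u = v

/-- Subtree weight: number of BFS-tree descendants of `v`, including `v`. -/
noncomputable def weight {n : ℕ} (G : SimpleGraph (Fin n)) (v : Fin n) : ℕ :=
  Nat.card {u : Fin n // Descend G v u}

/-- `c` is a child of `v` in the BFS tree. -/
def ChildOf {n : ℕ} (G : SimpleGraph (Fin n)) (c v : Fin n) : Prop :=
  parent G c = v ∧ c ≠ v

/-- BFS-tree depth of `v`: least number of parent steps reaching vertex `0`. -/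
noncomputable def depth {n : ℕ} (G : SimpleGraph (Fin n)) (v : Fin n) : ℕ :=
  sInf {k : ℕ | ((parent G)^[k] v).val = 0}

/-!
Among the BFS enumerations of `G`, take one whose sequence of subtree weights is lexicographically
largest. If a vertex `v` had children `c ⋖ d` with `w(c) < w(d)`, permute the labels inside the
subtrees of `c` and `d`, level by level, so that `d` receives the label `c`; among these
permutations take one whose parent sequence is lexicographically least. It is again a BFS
enumeration, because an inversion of parents on one level could be removed by swapping two labels
of that level. In it the subtree of `c` contains the image of the old subtree of `d`, and no subtree
rooted before `c` shrinks, so the weight sequence grows lexicographically: a contradiction.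

A relabeling `e` sends old labels to new ones, so the relabeled graph is `G.comap e.symm`.
-/

open Function

section Parent

variable {n : ℕ} (K : SimpleGraph (Fin n))

lemma parent_of_val_eq_zero {x : Fin n} (hx : x.val = 0) : parent K x = x := by
  unfold parent
  rw [dif_neg (by simp [hx])]

lemma parent_spec_of_lt {x : Fin n} (h : parent K x < x) :
    K.Adj (parent K x) x ∧ ∀ q, K.Adj q x → parent K x ≤ q := by
  unfold parent at h ⊢
  split_ifs at h ⊢ with hx
  · obtain ⟨i, hi, hadj⟩ := Nat.sInf_mem hx.2
    exact ⟨by convert hadj using 2; exact hi.symm, fun q hq => Nat.sInf_le ⟨q, rfl, hq⟩⟩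
  · exact absurd h (lt_irrefl x)

lemma parent_eq {x p : Fin n} (hx : 0 < x.val) (hadj : K.Adj p x)
    (hmin : ∀ q, K.Adj q x → p ≤ q) : parent K x = p := by
  have hne : {m : ℕ | ∃ i : Fin n, i.val = m ∧ K.Adj i x}.Nonempty := ⟨p, p, rfl, hadj⟩
  unfold parent
  rw [dif_pos ⟨hx, hne⟩]
  obtain ⟨i, hi, hadj'⟩ := Nat.sInf_mem hne
  refine Fin.ext (le_antisymm (Nat.sInf_le ⟨p, rfl, hadj⟩) ?_)
  have := Fin.le_def.mp (hmin i hadj')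
  rwa [hi] at this

lemma descend_refl (x : Fin n) : Descend K x x := ⟨0, rfl⟩

variable {K}

lemma Descend.of_parent {r u : Fin n} (h : Descend K r (parent K u)) : Descend K r u := by
  obtain ⟨k, hk⟩ := h
  exact ⟨k + 1, by rwa [iterate_succ_apply]⟩

lemma Descend.trans {a b c : Fin n} (hab : Descend K a b) (hbc : Descend K b c) :
    Descend K a c := by
  obtain ⟨k, hk⟩ := hab
  obtain ⟨m, hm⟩ := hbc
  exact ⟨k + m, by rw [iterate_add_apply, hm, hk]⟩

lemma Descend.parent_of_ne {r u : Fin n} (h : Descend K r u) (hne : u ≠ r) :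
    Descend K r (parent K u) := by
  obtain ⟨_ | k, hk⟩ := h
  · exact absurd hk hne
  · exact ⟨k, by rwa [← iterate_succ_apply]⟩

lemma Descend.val_pos {r u : Fin n} (h : Descend K r u) (hne : u ≠ r) : 0 < u.val := by
  obtain ⟨k, hk⟩ := h
  refine Nat.pos_of_ne_zero fun hu => hne ?_
  rw [← hk, iterate_fixed (parent_of_val_eq_zero K hu)]

lemma Descend.total {a b x : Fin n} (ha : Descend K a x) (hb : Descend K b x) :
    Descend K a b ∨ Descend K b a := by
  obtain ⟨k, rfl⟩ := ha
  obtain ⟨m, rfl⟩ := hb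
  rcases le_total k m with h | h
  · exact Or.inr ⟨m - k, by rw [← iterate_add_apply, Nat.sub_add_cancel h]⟩
  · exact Or.inl ⟨k - m, by rw [← iterate_add_apply, Nat.sub_add_cancel h]⟩

lemma depth_of_val_eq_zero {x : Fin n} (hx : x.val = 0) : depth K x = 0 :=
  Nat.sInf_eq_zero.mpr (Or.inl hx)

lemma val_pos_of_depth_pos {x : Fin n} (hx : 0 < depth K x) : 0 < x.val :=
  Nat.pos_of_ne_zero fun h => hx.ne' (depth_of_val_eq_zero h)

lemma weight_le_weight_of_descend {K' : SimpleGraph (Fin n)} {a b : Fin n} {f : Fin n → Fin n}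
    (hf : Injective f) (h : ∀ u, Descend K a u → Descend K' b (f u)) :
    weight K a ≤ weight K' b :=
  Nat.card_le_card_of_injective (fun u => ⟨f u.1, h u.1 u.2⟩)
    fun _ _ huv => Subtype.ext (hf (congrArg Subtype.val huv))

end Parent

namespace IsBFSEnum

variable {n : ℕ} {G : SimpleGraph (Fin n)} (hB : IsBFSEnum G)
include hB

lemma parent_le (x : Fin n) : parent G x ≤ x := by
  rcases Nat.eq_zero_or_pos x.val with hx | hx
  · exact (parent_of_val_eq_zero G hx).le
  · exact (hB.1 x hx).le

lemma adj_parent {x : Fin n} (hx : 0 < x.val) : G.Adj (parent G x) x :=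
  (parent_spec_of_lt G (hB.1 x hx)).1

lemma parent_le_of_adj {x q : Fin n} (hx : 0 < x.val) (hq : G.Adj q x) : parent G x ≤ q :=
  (parent_spec_of_lt G (hB.1 x hx)).2 q hq

lemma exists_iterate_parent_val_eq_zero (x : Fin n) : ∃ k, ((parent G)^[k] x).val = 0 := by
  induction x using WellFoundedLT.induction with
  | _ x ih =>
    rcases Nat.eq_zero_or_pos x.val with hx | hx
    · exact ⟨0, hx⟩
    · obtain ⟨k, hk⟩ := ih _ (hB.1 x hx)
      exact ⟨k + 1, by rwa [iterate_succ_apply]⟩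

lemma depth_parent {x : Fin n} (hx : 0 < x.val) : depth G (parent G x) + 1 = depth G x := by
  have h0 : 1 ≤ depth G x := by
    refine Nat.one_le_iff_ne_zero.mpr fun h => ?_
    rcases Nat.sInf_eq_zero.mp h with h | h
    · exact hx.ne' h
    · exact (Set.nonempty_iff_ne_empty.mp (hB.exists_iterate_parent_val_eq_zero x)) h
  unfold depth at h0 ⊢
  rw [← Nat.sInf_add h0]
  simp only [iterate_succ_apply]

lemma depth_mono : Monotone (depth G) := by
  intro x y hxy
  induction y using WellFoundedLT.induction generalizing x with
  | _ y ih =>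
    rcases hxy.eq_or_lt with rfl | hlt
    · exact le_rfl
    rcases Nat.eq_zero_or_pos x.val with hx | hx
    · simp [depth_of_val_eq_zero hx]
    have hy : 0 < y.val := hx.trans hlt
    rw [← hB.depth_parent hx, ← hB.depth_parent hy]
    exact Nat.succ_le_succ (ih _ (hB.1 y hy) (hB.2 x y hx hxy))

lemma lt_of_depth_lt {x y : Fin n} (h : depth G x < depth G y) : x < y :=
  hB.depth_mono.reflect_lt h

lemma depth_le_of_adj {u x : Fin n} (h : G.Adj u x) : depth G x ≤ depth G u + 1 := by
  rcases Nat.eq_zero_or_pos x.val with hx | hx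
  · simp [depth_of_val_eq_zero hx]
  · rw [← hB.depth_parent hx]
    exact Nat.succ_le_succ (hB.depth_mono (hB.parent_le_of_adj hx h))

end IsBFSEnum

lemma ChildOf.val_pos {n : ℕ} {G : SimpleGraph (Fin n)} {c v : Fin n} (h : ChildOf G c v) :
    0 < c.val :=
  Nat.pos_of_ne_zero fun hc => h.2 (h.1 ▸ (parent_of_val_eq_zero G hc).symm)

lemma ChildOf.descend {n : ℕ} {G : SimpleGraph (Fin n)} {c v : Fin n} (h : ChildOf G c v) :
    Descend G v c :=
  ⟨1, h.1⟩

lemma ChildOf.depth_eq {n : ℕ} {G : SimpleGraph (Fin n)} {c v : Fin n} (hB : IsBFSEnum G)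
    (h : ChildOf G c v) : depth G c = depth G v + 1 := by
  rw [← hB.depth_parent h.val_pos, h.1]

namespace Descend

variable {n : ℕ} {G : SimpleGraph (Fin n)} (hB : IsBFSEnum G)
include hB

lemma le {r u : Fin n} (h : Descend G r u) : r ≤ u := by
  obtain ⟨k, rfl⟩ := h
  induction k generalizing u with
  | zero => exact le_rfl
  | succ k ih => exact (ih (u := parent G u)).trans (hB.parent_le u)

lemma depth_le {r u : Fin n} (h : Descend G r u) : depth G r ≤ depth G u :=
  hB.depth_mono (h.le hB)

lemma eq_of_depth_le {r u : Fin n} (h : Descend G r u) (hd : depth G u ≤ depth G r) : u = r := by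
  by_contra hne
  have := (h.parent_of_ne hne).depth_le hB
  have := hB.depth_parent (h.val_pos hne)
  omega

lemma depth_lt {r u : Fin n} (h : Descend G r u) (hne : u ≠ r) : depth G r < depth G u :=
  (h.depth_le hB).lt_of_ne fun hd => hne (h.eq_of_depth_le hB hd.ge)

lemma lt_of_lt {r₁ r₂ a b : Fin n} (hr : r₁ < r₂) (hdr : depth G r₁ = depth G r₂)
    (ha : Descend G r₁ a) (hb : Descend G r₂ b) (hab : depth G a = depth G b) : a < b := by
  induction a using WellFoundedLT.induction generalizing b with
  | _ a ih =>
    by_cases har : a = r₁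
    · subst har
      rwa [hb.eq_of_depth_le hB (by omega)]
    have hda := ha.depth_lt hB har
    have hbr : b ≠ r₂ := by rintro rfl; omega
    have ha0 := ha.val_pos har
    have hb0 := hb.val_pos hbr
    have hlt := ih _ (hB.1 a ha0) (ha.parent_of_ne har) (hb.parent_of_ne hbr)
      (by have := hB.depth_parent ha0; have := hB.depth_parent hb0; omega)
    by_contra! hba
    exact (hB.2 b a hb0 hba).not_gt hlt

end Descend

lemma parent_comap_symm_apply {n : ℕ} {G : SimpleGraph (Fin n)} {e : Fin n ≃ Fin n} {u z : Fin n}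
    (hu : 0 < (e u).val) (hadj : G.Adj z u) (hmin : ∀ w, G.Adj w u → e z ≤ e w) :
    parent (G.comap e.symm) (e u) = e z :=
  parent_eq _ hu (by simpa using hadj) fun q hq => by
    simpa using hmin (e.symm q) (by simpa using hq)

lemma parent_comap_swap {n : ℕ} {K : SimpleGraph (Fin n)} {i x y : Fin n} (hi : parent K i < i)
    (hx : parent K i < x) (hy : parent K i < y) :
    parent (K.comap (Equiv.swap x y)) (Equiv.swap x y i) = parent K i := by
  obtain ⟨hadj, hmin⟩ := parent_spec_of_lt K hi
  have hfix : Equiv.swap x y (parent K i) = parent K i :=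
    Equiv.swap_apply_of_ne_of_ne hx.ne hy.ne
  have hlt : parent K i < Equiv.swap x y i := by
    rw [Equiv.swap_apply_def]
    split_ifs <;> assumption
  refine parent_eq _ (Nat.zero_le _ |>.trans_lt hlt) (by simpa [hfix] using hadj) fun q hq => ?_
  have := hmin _ (by simpa using hq)
  rw [Equiv.swap_apply_def] at this
  split_ifs at this with hqx hqy
  exacts [hqx ▸ hx.le, hqy ▸ hy.le, this]

lemma IsBFSEnum.toLex_parent_comap_swap_lt {n : ℕ} {G K : SimpleGraph (Fin n)} (hB : IsBFSEnum G)
    (hK : ∀ j : Fin n, 0 < j.val → depth G (parent K j) + 1 = depth G j) {x y : Fin n}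
    (hx : 0 < x.val) (hxy : x ≤ y) (hd : depth G x = depth G y)
    (hlt : parent K y < parent K x) :
    toLex (parent (K.comap (Equiv.swap x y))) < toLex (parent K) := by
  have hy : 0 < y.val := hx.trans_le hxy
  have parent_lt {j : Fin n} (hj : 0 < j.val) (hjx : depth G j ≤ depth G x) :
      parent K j < x :=
    hB.lt_of_depth_lt (by have := hK j hj; omega)
  refine ⟨x, fun j hj => ?_, ?_⟩
  · rcases Nat.eq_zero_or_pos j.val with hj0 | hj0
    · change parent _ j = parent K j
      rw [parent_of_val_eq_zero _ hj0, parent_of_val_eq_zero _ hj0]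
    have hjx := parent_lt hj0 (hB.depth_mono hj.le)
    have := parent_comap_swap (hB.lt_of_depth_lt (by have := hK j hj0; omega)) hjx
      (hjx.trans_le hxy)
    rwa [Equiv.swap_apply_of_ne_of_ne hj.ne (hj.trans_le hxy).ne] at this
  · have hyx := parent_lt hy hd.ge
    have := parent_comap_swap (hB.lt_of_depth_lt (by have := hK y hy; omega)) hyx
      (hyx.trans_le hxy)
    rw [Equiv.swap_apply_right] at this
    exact this.trans_lt hlt

structure SiblingPair {n : ℕ} (G : SimpleGraph (Fin n)) (v c d : Fin n) : Prop where
  bfs : IsBFSEnum G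
  childOf_left : ChildOf G c v
  childOf_right : ChildOf G d v
  covBy : c ⋖ d

def subtreePair {n : ℕ} (G : SimpleGraph (Fin n)) (c d : Fin n) : Set (Fin n) :=
  {u | Descend G c u ∨ Descend G d u}

lemma mem_subtreePair_of_parent_mem {n : ℕ} {G : SimpleGraph (Fin n)} {c d u : Fin n}
    (hu : parent G u ∈ subtreePair G c d) : u ∈ subtreePair G c d :=
  hu.imp Descend.of_parent Descend.of_parent

lemma left_mem_subtreePair {n : ℕ} (G : SimpleGraph (Fin n)) (c d : Fin n) :
    c ∈ subtreePair G c d :=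
  Or.inl (descend_refl G c)

lemma right_mem_subtreePair {n : ℕ} (G : SimpleGraph (Fin n)) (c d : Fin n) :
    d ∈ subtreePair G c d :=
  Or.inr (descend_refl G d)

structure IsSubtreePerm {n : ℕ} (G : SimpleGraph (Fin n)) (c d : Fin n) (e : Fin n ≃ Fin n) :
    Prop where
  apply_of_not_mem : ∀ u ∉ subtreePair G c d, e u = u
  depth_apply : ∀ u, depth G (e u) = depth G u

namespace IsSubtreePerm

variable {n : ℕ} {G : SimpleGraph (Fin n)} {c d : Fin n} {e : Fin n ≃ Fin n}

lemma refl : IsSubtreePerm G c d (Equiv.refl _) :=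
  ⟨fun _ _ => rfl, fun _ => rfl⟩

lemma apply_mem_iff (he : IsSubtreePerm G c d e) {u : Fin n} :
    e u ∈ subtreePair G c d ↔ u ∈ subtreePair G c d := by
  refine ⟨fun heu => by_contra fun hu => ?_, fun hu => by_contra fun heu => ?_⟩
  · exact hu (he.apply_of_not_mem u hu ▸ heu)
  · exact heu (by rwa [e.injective (he.apply_of_not_mem _ heu)])

lemma swap (he : IsSubtreePerm G c d e) {x y : Fin n} (hx : x ∈ subtreePair G c d)
    (hy : y ∈ subtreePair G c d) (hd : depth G x = depth G y) :
    IsSubtreePerm G c d (e.trans (Equiv.swap x y)) where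
  apply_of_not_mem u hu := by
    rw [Equiv.trans_apply, he.apply_of_not_mem u hu]
    exact Equiv.swap_apply_of_ne_of_ne (by rintro rfl; exact hu hx) (by rintro rfl; exact hu hy)
  depth_apply u := by
    rw [Equiv.trans_apply, ← he.depth_apply u]
    rcases eq_or_ne (e u) x with hux | hux
    · rw [hux, Equiv.swap_apply_left, hd]
    rcases eq_or_ne (e u) y with huy | huy
    · rw [huy, Equiv.swap_apply_right, hd]
    · rw [Equiv.swap_apply_of_ne_of_ne hux huy]

end IsSubtreePerm

namespace SiblingPair

variable {n : ℕ} {G : SimpleGraph (Fin n)} {v c d : Fin n} (h : SiblingPair G v c d)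
include h

lemma depth_right : depth G d = depth G c := by
  rw [h.childOf_left.depth_eq h.bfs, h.childOf_right.depth_eq h.bfs]

lemma le_of_mem {u : Fin n} (hu : u ∈ subtreePair G c d) : c ≤ u := by
  rcases hu with hu | hu
  · exact hu.le h.bfs
  · exact h.covBy.le.trans (hu.le h.bfs)

lemma val_pos_of_mem {x : Fin n} (hx : x ∈ subtreePair G c d) : 0 < x.val :=
  h.childOf_left.val_pos.trans_le (h.le_of_mem hx)

lemma not_mem_of_lt {u : Fin n} (hu : u < c) : u ∉ subtreePair G c d :=
  fun hmem => (h.le_of_mem hmem).not_gt hu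

lemma depth_le_of_mem {u : Fin n} (hu : u ∈ subtreePair G c d) : depth G c ≤ depth G u := by
  rcases hu with hu | hu
  · exact hu.depth_le h.bfs
  · exact h.depth_right ▸ hu.depth_le h.bfs

lemma eq_or_eq_of_mem {u : Fin n} (hu : u ∈ subtreePair G c d) (hd : depth G u ≤ depth G c) :
    u = c ∨ u = d := by
  rcases hu with hu | hu
  · exact Or.inl (hu.eq_of_depth_le h.bfs hd)
  · exact Or.inr (hu.eq_of_depth_le h.bfs (h.depth_right ▸ hd))

lemma parent_mem_iff {x : Fin n} (hx : 0 < x.val) :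
    parent G x ∈ subtreePair G c d ↔ x ∈ subtreePair G c d ∧ depth G c < depth G x := by
  have hdx := h.bfs.depth_parent hx
  refine ⟨fun hp => ⟨mem_subtreePair_of_parent_mem hp, by have := h.depth_le_of_mem hp; omega⟩,
    fun ⟨hmem, hd⟩ => ?_⟩
  rcases hmem with hu | hu
  · exact Or.inl (hu.parent_of_ne (by rintro rfl; omega))
  · exact Or.inr (hu.parent_of_ne (by rintro rfl; have := h.depth_right; omega))

lemma parent_eq_of_mem {x : Fin n} (hx : x ∈ subtreePair G c d)
    (hp : parent G x ∉ subtreePair G c d) : parent G x = v := by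
  rcases h.eq_or_eq_of_mem hx
    (not_lt.mp fun hd => hp ((h.parent_mem_iff (h.val_pos_of_mem hx)).mpr ⟨hx, hd⟩))
    with rfl | rfl
  exacts [h.childOf_left.1, h.childOf_right.1]

lemma mem_of_le_of_le {a z b : Fin n} (ha : a ∈ subtreePair G c d) (hb : b ∈ subtreePair G c d)
    (haz : a ≤ z) (hzb : z ≤ b) (hda : depth G a = depth G z) (hdb : depth G b = depth G z) :
    z ∈ subtreePair G c d := by
  induction z using WellFoundedLT.induction generalizing a b with
  | _ z ih =>
    rcases le_or_gt (depth G z) (depth G c) with hz | hz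
    · have hbd : b ≤ d := by
        rcases h.eq_or_eq_of_mem hb (hdb ▸ hz) with rfl | rfl
        exacts [h.covBy.le, le_rfl]
      rcases h.covBy.eq_or_eq ((h.le_of_mem ha).trans haz) (hzb.trans hbd) with rfl | rfl
      exacts [left_mem_subtreePair G _ _, right_mem_subtreePair G _ _]
    have ha0 := val_pos_of_depth_pos (K := G) (x := a) (by omega)
    have hz0 := val_pos_of_depth_pos (K := G) (x := z) (by omega)
    have hb0 := val_pos_of_depth_pos (K := G) (x := b) (by omega)
    have := h.bfs.depth_parent ha0
    have := h.bfs.depth_parent hz0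
    have := h.bfs.depth_parent hb0
    refine mem_subtreePair_of_parent_mem (ih _ (h.bfs.1 z hz0)
      ((h.parent_mem_iff ha0).mpr ⟨ha, by omega⟩) ((h.parent_mem_iff hb0).mpr ⟨hb, by omega⟩)
      (h.bfs.2 a z ha0 haz) (h.bfs.2 z b hz0 hzb) (by omega) (by omega))

lemma lt_of_le_of_not_mem {s s' a : Fin n} (hs : s ∈ subtreePair G c d)
    (hs' : s' ∈ subtreePair G c d) (ha : a ∉ subtreePair G c d) (hds : depth G s = depth G a)
    (hds' : depth G s' = depth G a) (hsa : s ≤ a) : s' < a :=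
  lt_of_not_ge fun has' => ha (h.mem_of_le_of_le hs hs' hsa has' hds hds')

lemma lt_of_not_mem_of_le {s s' a : Fin n} (hs : s ∈ subtreePair G c d)
    (hs' : s' ∈ subtreePair G c d) (ha : a ∉ subtreePair G c d) (hds : depth G s = depth G a)
    (hds' : depth G s' = depth G a) (has : a ≤ s) : a < s' :=
  lt_of_not_ge fun hs'a => ha (h.mem_of_le_of_le hs' hs hs'a has hds' hds)

lemma descend_of_descend_of_mem {i a b : Fin n} (hi : i ∉ subtreePair G c d)
    (ha : a ∈ subtreePair G c d) (hb : b ∈ subtreePair G c d) (hia : Descend G i a) :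
    Descend G i b := by
  have hiv : Descend G i v := by
    rcases ha with ha | ha <;> rcases hia.total ha with hir | hri
    · rw [← h.childOf_left.1]
      exact hir.parent_of_ne fun hc => hi (hc ▸ left_mem_subtreePair G c d)
    · exact absurd (Or.inl hri) hi
    · rw [← h.childOf_right.1]
      exact hir.parent_of_ne fun hd => hi (hd ▸ right_mem_subtreePair G c d)
    · exact absurd (Or.inr hri) hi
  rcases hb with hb | hb
  · exact hiv.trans (Descend.trans (ChildOf.descend h.childOf_left) hb)
  · exact hiv.trans (Descend.trans (ChildOf.descend h.childOf_right) hb)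

lemma not_adj {z u : Fin n} (hz : Descend G c z) (hu : Descend G d u)
    (hd : depth G z + 1 = depth G u) : ¬ G.Adj z u := by
  intro hadj
  have hu0 : 0 < u.val := val_pos_of_depth_pos (K := G) (by omega)
  have hud : u ≠ d := by
    rintro rfl
    have := hz.depth_le h.bfs
    have := h.depth_right
    omega
  have := h.bfs.depth_parent hu0
  exact (h.bfs.parent_le_of_adj hu0 hadj).not_gt
    (Descend.lt_of_lt h.bfs h.covBy.lt h.depth_right.symm hz (hu.parent_of_ne hud) (by omega))

section Relabel

variable {e : Fin n ≃ Fin n} (he : IsSubtreePerm G c d e)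
include he

lemma parent_relabel_of_parent_not_mem {u : Fin n} (hu : 0 < u.val)
    (hp : parent G u ∉ subtreePair G c d) : parent (G.comap e.symm) (e u) = parent G u := by
  have hep := he.apply_of_not_mem _ hp
  have hdp := h.bfs.depth_parent hu
  have heu : 0 < (e u).val := val_pos_of_depth_pos (K := G) (by rw [he.depth_apply]; omega)
  conv_rhs => rw [← hep]
  refine parent_comap_symm_apply heu (h.bfs.adj_parent hu) fun w hw => ?_
  have hpw := h.bfs.parent_le_of_adj hu hw
  rw [hep]
  by_cases hwS : w ∈ subtreePair G c d
  · have := h.bfs.depth_le_of_adj hw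
    rcases (show depth G (parent G u) ≤ depth G w by omega).eq_or_lt with hd | hd
    · exact (h.lt_of_not_mem_of_le hwS (he.apply_mem_iff.mpr hwS) hp hd.symm
        (by rw [he.depth_apply, hd]) hpw).le
    · exact (h.bfs.lt_of_depth_lt (by rwa [he.depth_apply])).le
  · rwa [he.apply_of_not_mem w hwS]

lemma exists_parent_relabel_of_parent_mem {u : Fin n} (hu : 0 < u.val)
    (hp : parent G u ∈ subtreePair G c d) :
    ∃ z ∈ subtreePair G c d, G.Adj z u ∧ depth G z + 1 = depth G u ∧
      parent (G.comap e.symm) (e u) = e z := by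
  have hdp := h.bfs.depth_parent hu
  obtain ⟨z, ⟨hzS, hadj, hdz⟩, hmin⟩ := Set.exists_min_image
    {z | z ∈ subtreePair G c d ∧ G.Adj z u ∧ depth G z + 1 = depth G u} e (Set.toFinite _)
    ⟨parent G u, hp, h.bfs.adj_parent hu, hdp⟩
  have heu : 0 < (e u).val := val_pos_of_depth_pos (K := G) (by rw [he.depth_apply]; omega)
  refine ⟨z, hzS, hadj, hdz, parent_comap_symm_apply heu hadj fun w hw => ?_⟩
  have := h.bfs.depth_le_of_adj hw
  by_cases hdw : depth G w + 1 = depth G u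
  · by_cases hwS : w ∈ subtreePair G c d
    · exact hmin w ⟨hwS, hw, hdw⟩
    · rw [he.apply_of_not_mem w hwS]
      exact (h.lt_of_le_of_not_mem hp (he.apply_mem_iff.mpr hzS) hwS (by omega)
        (by rw [he.depth_apply]; omega) (h.bfs.parent_le_of_adj hu hw)).le
  · exact (h.bfs.lt_of_depth_lt (by rw [he.depth_apply, he.depth_apply]; omega)).le

lemma parent_relabel_spec {x : Fin n} (hx : 0 < x.val) :
    depth G (parent (G.comap e.symm) x) + 1 = depth G x ∧
      (parent G x ∉ subtreePair G c d → parent (G.comap e.symm) x = parent G x) ∧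
      (parent G x ∈ subtreePair G c d → parent (G.comap e.symm) x ∈ subtreePair G c d) := by
  obtain ⟨u, rfl⟩ := e.surjective x
  have hdx := h.bfs.depth_parent hx
  have hu : 0 < u.val := val_pos_of_depth_pos (K := G) (by rw [← he.depth_apply]; omega)
  have hiff : parent G (e u) ∈ subtreePair G c d ↔ parent G u ∈ subtreePair G c d := by
    rw [h.parent_mem_iff hx, h.parent_mem_iff hu, he.apply_mem_iff, he.depth_apply]
  by_cases hp : parent G u ∈ subtreePair G c d
  · obtain ⟨z, hzS, -, hdz, hz⟩ := h.exists_parent_relabel_of_parent_mem he hu hp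
    refine ⟨by rw [hz, he.depth_apply, he.depth_apply, hdz], fun hpx => absurd (hiff.mpr hp) hpx,
      fun _ => hz ▸ he.apply_mem_iff.mpr hzS⟩
  · have hz := h.parent_relabel_of_parent_not_mem he hu hp
    refine ⟨by rw [hz, he.depth_apply, h.bfs.depth_parent hu], fun hpx => ?_,
      fun hpx => absurd (hiff.mp hpx) hp⟩
    rw [hz]
    by_cases huS : u ∈ subtreePair G c d
    · rw [h.parent_eq_of_mem huS hp, h.parent_eq_of_mem (he.apply_mem_iff.mpr huS) hpx]
    · rw [he.apply_of_not_mem u huS]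

lemma parent_mem_of_parent_relabel_lt {x y : Fin n} (hx : 0 < x.val) (hxy : x ≤ y)
    (hlt : parent (G.comap e.symm) y < parent (G.comap e.symm) x) :
    depth G x = depth G y ∧ parent G x ∈ subtreePair G c d ∧ parent G y ∈ subtreePair G c d := by
  have hy : 0 < y.val := hx.trans_le hxy
  obtain ⟨hdx, hx₁, hx₂⟩ := h.parent_relabel_spec he hx
  obtain ⟨hdy, hy₁, hy₂⟩ := h.parent_relabel_spec he hy
  have hd : depth G x = depth G y := by
    refine (h.bfs.depth_mono hxy).antisymm (not_lt.mp fun hd => hlt.not_gt ?_)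
    exact h.bfs.lt_of_depth_lt (by omega)
  have hpx := h.bfs.depth_parent hx
  have hpy := h.bfs.depth_parent hy
  have hle := h.bfs.2 x y hx hxy
  refine ⟨hd, ?_⟩
  by_cases hxS : parent G x ∈ subtreePair G c d <;> by_cases hyS : parent G y ∈ subtreePair G c d
  · exact ⟨hxS, hyS⟩
  · refine absurd hlt (not_lt.mpr ?_)
    rw [hy₁ hyS]
    exact (h.lt_of_le_of_not_mem hxS (hx₂ hxS) hyS (by omega) (by omega) hle).le
  · refine absurd hlt (not_lt.mpr ?_)
    rw [hx₁ hxS]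
    exact (h.lt_of_not_mem_of_le hyS (hy₂ hyS) hxS (by omega) (by omega) hle).le
  · exact absurd hlt (by rw [hx₁ hxS, hy₁ hyS]; exact not_lt.mpr hle)

lemma descend_relabel_of_not_mem {i u : Fin n} (hi : i ∉ subtreePair G c d)
    (hiu : Descend G i u) : Descend (G.comap e.symm) i (e u) := by
  induction u using WellFoundedLT.induction with
  | _ u ih =>
    by_cases hui : u = i
    · subst hui
      rw [he.apply_of_not_mem u hi]
      exact descend_refl _ u
    have hu := hiu.val_pos hui
    have hp := hiu.parent_of_ne hui
    refine Descend.of_parent ?_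
    by_cases hpS : parent G u ∈ subtreePair G c d
    · obtain ⟨z, hzS, -, hdz, hz⟩ := h.exists_parent_relabel_of_parent_mem he hu hpS
      rw [hz]
      exact ih z (h.bfs.lt_of_depth_lt (by omega)) (h.descend_of_descend_of_mem hi hpS hzS hp)
    · rw [h.parent_relabel_of_parent_not_mem he hu hpS, ← he.apply_of_not_mem _ hpS]
      exact ih _ (h.bfs.1 u hu) hp

lemma descend_relabel_of_descend_right (hdc : e d = c) {u : Fin n} (hu : Descend G d u) :
    Descend (G.comap e.symm) c (e u) := by
  induction u using WellFoundedLT.induction with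
  | _ u ih =>
    by_cases hud : u = d
    · subst hud
      rw [hdc]
      exact descend_refl _ c
    have hu0 := hu.val_pos hud
    obtain ⟨z, hzS, hadj, hdz, hz⟩ :=
      h.exists_parent_relabel_of_parent_mem he hu0 (Or.inr (hu.parent_of_ne hud))
    have hzd : Descend G d z := hzS.resolve_left fun hzc => h.not_adj hzc hu hdz hadj
    exact Descend.of_parent (hz ▸ ih z (h.bfs.lt_of_depth_lt (by omega)) hzd)

end Relabel

theorem exists_isBFSEnum_relabel :
    ∃ e : Fin n ≃ Fin n, IsSubtreePerm G c d e ∧ e d = c ∧ IsBFSEnum (G.comap e.symm) := by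
  have hswap := IsSubtreePerm.refl.swap (left_mem_subtreePair G c d)
    (right_mem_subtreePair G c d) h.depth_right.symm
  obtain ⟨e, ⟨he, hdc⟩, hmin⟩ := Set.exists_min_image
    {e : Fin n ≃ Fin n | IsSubtreePerm G c d e ∧ e d = c}
    (fun e => toLex (parent (G.comap e.symm))) (Set.toFinite _) ⟨_, hswap, by simp⟩
  refine ⟨e, he, hdc, fun x hx => h.bfs.lt_of_depth_lt ?_, fun x y hx hxy => ?_⟩
  · have := (h.parent_relabel_spec he hx).1
    omega
  refine not_lt.mp fun hlt => ?_
  obtain ⟨hd, hxS, hyS⟩ := h.parent_mem_of_parent_relabel_lt he hx hxy hlt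
  obtain ⟨hxS', hcx⟩ := (h.parent_mem_iff hx).mp hxS
  obtain ⟨hyS', hcy⟩ := (h.parent_mem_iff (hx.trans_le hxy)).mp hyS
  have hdc' : e.trans (Equiv.swap x y) d = c := by
    rw [Equiv.trans_apply, hdc]
    exact Equiv.swap_apply_of_ne_of_ne (by rintro rfl; omega) (by rintro rfl; omega)
  exact (hmin _ ⟨he.swap hxS' hyS' hd, hdc'⟩).not_gt
    (h.bfs.toLex_parent_comap_swap_lt (fun j hj => (h.parent_relabel_spec he hj).1) hx hxy hd hlt)

end SiblingPair

lemma toLex_lt_toLex_of_le_of_lt {ι β : Type*} [LinearOrder ι] [WellFoundedLT ι] [PartialOrder β]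
    {f g : ι → β} {i : ι} (hle : ∀ j < i, f j ≤ g j) (hlt : f i < g i) : toLex f < toLex g := by
  let s : Set ι := {j | f j ≠ g j}
  have hne : s.Nonempty := ⟨i, hlt.ne⟩
  refine ⟨wellFounded_lt.min s hne, fun k hk => not_not.mp fun hfk =>
    wellFounded_lt.not_lt_min s (x := k) hfk hk, ?_⟩
  rcases (wellFounded_lt.min_le (s := s) (x := i) hlt.ne).lt_or_eq with hji | hji
  · exact (hle _ hji).lt_of_ne (wellFounded_lt.min_mem s hne)
  · exact hji ▸ hlt

namespace IsBFSEnum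

variable {n : ℕ} {G : SimpleGraph (Fin n)} (hB : IsBFSEnum G)
include hB

lemma childOf_of_le_of_le {v c₀ d₀ z : Fin n} (hc : ChildOf G c₀ v) (hd : ChildOf G d₀ v)
    (hcz : c₀ ≤ z) (hzd : z ≤ d₀) : ChildOf G z v := by
  have hz := hc.val_pos.trans_le hcz
  refine ⟨le_antisymm (hd.1 ▸ hB.2 z d₀ hz hzd) (hc.1 ▸ hB.2 c₀ z hc.val_pos hcz), ?_⟩
  rintro rfl
  exact (hc.1 ▸ hB.1 c₀ hc.val_pos).not_ge hcz

lemma exists_covBy_childOf_weight_lt {v c₀ d₀ : Fin n} (hc : ChildOf G c₀ v)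
    (hd : ChildOf G d₀ v) (hle : c₀ ≤ d₀) (hw : weight G c₀ < weight G d₀) :
    ∃ c d, c ⋖ d ∧ ChildOf G c v ∧ ChildOf G d v ∧ weight G c < weight G d := by
  by_contra! hcon
  have : AntitoneOn (weight G) (Set.Icc c₀ d₀) :=
    antitoneOn_of_succ_le Set.ordConnected_Icc fun a ha ha' hsa =>
      hcon a _ (Order.covBy_succ_of_not_isMax ha) (hB.childOf_of_le_of_le hc hd ha'.1 ha'.2)
        (hB.childOf_of_le_of_le hc hd hsa.1 hsa.2)
  exact (this ⟨le_rfl, hle⟩ ⟨hle, le_rfl⟩ hle).not_gt hw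

end IsBFSEnum

theorem stmt2_general {n : ℕ} (G : SimpleGraph (Fin n)) (hB : IsBFSEnum G) :
    ∃ G' : SimpleGraph (Fin n), Nonempty (G ≃g G') ∧ IsBFSEnum G' ∧
      ∀ v c d : Fin n, ChildOf G' c v → ChildOf G' d v → c ≤ d →
        weight G' d ≤ weight G' c := by
  obtain ⟨G₀, ⟨⟨φ⟩, hB₀⟩, hmax⟩ := Set.exists_max_image
    {K : SimpleGraph (Fin n) | Nonempty (G ≃g K) ∧ IsBFSEnum K} (fun K => toLex (weight K))
    (Set.toFinite _) ⟨G, ⟨.refl⟩, hB⟩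
  refine ⟨G₀, ⟨φ⟩, hB₀, fun v c₀ d₀ hc₀ hd₀ hle => not_lt.mp fun hw => ?_⟩
  obtain ⟨c, d, hcd, hc, hd, hlt⟩ := hB₀.exists_covBy_childOf_weight_lt hc₀ hd₀ hle hw
  have h : SiblingPair G₀ v c d := ⟨hB₀, hc, hd, hcd⟩
  obtain ⟨e, he, hdc, hBe⟩ := h.exists_isBFSEnum_relabel
  refine (hmax _ ⟨⟨φ.trans (SimpleGraph.Iso.comap e.symm G₀).symm⟩, hBe⟩).not_gt
    (toLex_lt_toLex_of_le_of_lt (i := c) (fun i hi => ?_) (hlt.trans_le ?_))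
  · exact weight_le_weight_of_descend e.injective
      fun _ => h.descend_relabel_of_not_mem he (h.not_mem_of_lt hi)
  · exact weight_le_weight_of_descend e.injective fun _ => h.descend_relabel_of_descend_right he hdc

theorem stmt2 {n : ℕ} (G : SimpleGraph (Fin n)) (hG : G.Connected) (hB : IsBFSEnum G) :
    ∃ G' : SimpleGraph (Fin n), Nonempty (G ≃g G') ∧ IsBFSEnum G' ∧
      ∀ v c d : Fin n, ChildOf G' c v → ChildOf G' d v → c ≤ d →
        weight G' d ≤ weight G' c :=
  stmt2_general G hB
end

section
/- Every simple graph on n vertices with no 4-cycle (no subgraph isomorphic to C4) has at most (n/4)(1 + √(4n − 3)) edges. -/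
/-!
In a C4-free graph two distinct vertices have at most one common neighbour, so the pairs of
neighbours of the various vertices are pairwise distinct pairs of vertices:
`∑ᵥ C(d(v), 2) ≤ C(n, 2)`. With `∑ᵥ d(v) = 2m` and Cauchy–Schwarz `(2m)² ≤ n ∑ᵥ d(v)²` this gives
`4m² ≤ n (n² - n + 2m)`, i.e. `(4m - n)² ≤ n² (4n - 3)`, which is the claimed bound.
-/

/-- `G` contains a 4-cycle as a subgraph. -/
def HasC4 {V : Type*} (G : SimpleGraph V) : Prop :=
  ∃ a b c d : V, a ≠ b ∧ a ≠ c ∧ a ≠ d ∧ b ≠ c ∧ b ≠ d ∧ c ≠ d ∧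
    G.Adj a b ∧ G.Adj b c ∧ G.Adj c d ∧ G.Adj d a

open Finset

lemma le_mul_one_add_sqrt_of_sq_le {m n : ℝ} (hn : 0 ≤ n)
    (h : 4 * m ^ 2 ≤ n * (n ^ 2 - n + 2 * m)) :
    m ≤ n / 4 * (1 + √(4 * n - 3)) := by
  have hsq : (4 * m - n) ^ 2 ≤ (n * √(4 * n - 3)) ^ 2 := by
    rcases le_or_gt (4 * n - 3) 0 with hneg | hpos
    · nlinarith
    · rw [mul_pow, Real.sq_sqrt hpos.le]; nlinarith
  linarith [(abs_le_of_sq_le_sq' hsq (by positivity)).2]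

namespace SimpleGraph

variable {V : Type*} {G : SimpleGraph V}

lemma eq_of_not_hasC4 (h : ¬ HasC4 G) {a b c d : V} (hab : a ≠ b)
    (hca : G.Adj c a) (hcb : G.Adj c b) (hda : G.Adj d a) (hdb : G.Adj d b) : c = d := by
  by_contra hcd
  exact h ⟨a, c, b, d, hca.ne', hab, hda.ne', hcb.ne, hcd, hdb.ne', hca.symm, hcb, hdb.symm, hda⟩

variable [Fintype V] [DecidableEq V] [DecidableRel G.Adj]

lemma sum_degree_choose_two_le (h : ¬ HasC4 G) :
    ∑ v, (G.degree v).choose 2 ≤ (Fintype.card V).choose 2 := by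
  have hdisj : ((univ : Finset V) : Set V).PairwiseDisjoint
      fun v ↦ (G.neighborFinset v).powersetCard 2 := by
    intro v _ w _ hvw
    refine Finset.disjoint_left.2 fun s hsv hsw ↦ hvw ?_
    rw [mem_powersetCard] at hsv hsw
    obtain ⟨a, b, hab, rfl⟩ := card_eq_two.1 hsv.2
    simp only [insert_subset_iff, singleton_subset_iff, mem_neighborFinset] at hsv hsw
    exact eq_of_not_hasC4 h hab hsv.1.1 hsv.1.2 hsw.1.1 hsw.1.2
  calc ∑ v, (G.degree v).choose 2
      = #(univ.biUnion fun v ↦ (G.neighborFinset v).powersetCard 2) := by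
        rw [card_biUnion hdisj]; simp [card_powersetCard]
    _ ≤ #((univ : Finset V).powersetCard 2) :=
        card_le_card <| biUnion_subset.2 fun v _ ↦ powersetCard_mono (subset_univ _)
    _ = (Fintype.card V).choose 2 := by rw [card_powersetCard, card_univ]

lemma four_mul_sq_card_edgeFinset_le (h : ¬ HasC4 G) :
    4 * (#G.edgeFinset : ℝ) ^ 2 ≤
      Fintype.card V * ((Fintype.card V : ℝ) ^ 2 - Fintype.card V + 2 * #G.edgeFinset) := by
  have hchoose : ∑ v, ((G.degree v).choose 2 : ℝ) ≤ ((Fintype.card V).choose 2 : ℝ) := by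
    exact_mod_cast sum_degree_choose_two_le h
  simp only [Nat.cast_choose_two, ← sum_div, mul_sub, mul_one, sum_sub_distrib, ← sq] at hchoose
  have hsum : ∑ v, (G.degree v : ℝ) = 2 * #G.edgeFinset := by
    exact_mod_cast G.sum_degrees_eq_twice_card_edges
  have hcs : (∑ v, (G.degree v : ℝ)) ^ 2 ≤ Fintype.card V * ∑ v, (G.degree v : ℝ) ^ 2 := by
    simpa using sq_sum_le_card_mul_sum_sq (s := univ) (f := fun v ↦ (G.degree v : ℝ))
  rw [hsum] at hcs hchoose
  nlinarith [(Fintype.card V).cast_nonneg (α := ℝ)]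

end SimpleGraph

theorem stmt7 {n : ℕ} (G : SimpleGraph (Fin n)) (h : ¬ HasC4 G) :
    (G.edgeSet.ncard : ℝ) ≤ (n / 4 : ℝ) * (1 + Real.sqrt (4 * n - 3)) := by
  classical
  have hcount := G.four_mul_sq_card_edgeFinset_le h
  rw [Fintype.card_fin] at hcount
  rw [← G.coe_edgeFinset, Set.ncard_coe_finset]
  exact le_mul_one_add_sqrt_of_sq_le n.cast_nonneg hcount
end

section
/- If G is a C4-free simple graph on n vertices with minimum degree δ and maximum degree Δ, and δ ≥ 2, then Δ(δ − 1) ≤ n − 1. -/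
theorem stmt9 {n : ℕ} [NeZero n] (G : SimpleGraph (Fin n)) [DecidableRel G.Adj]
    (h4 : ¬ HasC4 G) (hd : 2 ≤ G.minDegree) :
    G.maxDegree * (G.minDegree - 1) ≤ n - 1 := by
  obtain ⟨v, hv⟩ := G.exists_maximal_degree_vertex
  set S : Fin n → Finset (Fin n) := fun u => (G.neighborFinset u).erase v with hS
  have hdisj : ∀ u ∈ G.neighborFinset v, ∀ u' ∈ G.neighborFinset v, u ≠ u' →
      Disjoint (S u) (S u') := by
    intro u hu u' hu' huu'
    rw [Finset.disjoint_left]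
    intro w hw hw'
    simp only [hS, Finset.mem_erase, SimpleGraph.mem_neighborFinset] at hw hw' hu hu'
    exact h4 ⟨v, u, w, u', hu.ne, hw.1.symm, hu'.ne, hw.2.ne, huu',
      hw'.2.ne', hu, hw.2, hw'.2.symm, hu'.symm⟩
  have hcard : ∀ u ∈ G.neighborFinset v, G.minDegree - 1 ≤ (S u).card := by
    intro u hu
    rw [SimpleGraph.mem_neighborFinset] at hu
    have hvmem : v ∈ G.neighborFinset u := by
      rw [SimpleGraph.mem_neighborFinset]; exact hu.symm
    have : (S u).card = G.degree u - 1 := by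
      show ((G.neighborFinset u).erase v).card = G.degree u - 1
      rw [Finset.card_erase_of_mem hvmem]
      rfl
    rw [this]
    exact Nat.sub_le_sub_right (G.minDegree_le_degree u) 1
  have hsub : (G.neighborFinset v).biUnion S ⊆ Finset.univ.erase v := by
    intro w hw
    rw [Finset.mem_biUnion] at hw
    obtain ⟨u, _, hwu⟩ := hw
    have hwu' : w ≠ v ∧ w ∈ G.neighborFinset u := Finset.mem_erase.mp hwu
    exact Finset.mem_erase.mpr ⟨hwu'.1, Finset.mem_univ w⟩
  have h1 : G.maxDegree * (G.minDegree - 1) ≤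
      ((G.neighborFinset v).biUnion S).card := by
    rw [Finset.card_biUnion hdisj]
    calc G.maxDegree * (G.minDegree - 1)
        = (G.neighborFinset v).card * (G.minDegree - 1) := by
          rw [hv, SimpleGraph.degree]
      _ = ∑ _u ∈ G.neighborFinset v, (G.minDegree - 1) := by
          rw [Finset.sum_const, smul_eq_mul]
      _ ≤ ∑ u ∈ G.neighborFinset v, (S u).card := Finset.sum_le_sum hcard
  have h2 := Finset.card_le_card hsub
  rw [Finset.card_erase_of_mem (Finset.mem_univ v), Finset.card_univ, Fintype.card_fin] at h2
  exact h1.trans h2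
end

section
/- ex(10; C3, C4) is attained by the Petersen graph: the maximum number of edges of a 10-vertex graph with girth at least 5 is 15. -/
/-- The Petersen graph as the Kneser graph `K(5, 2)`. -/
def petersen : SimpleGraph {s : Finset (Fin 5) // s.card = 2} where
  Adj a b := Disjoint a.1 b.1
  symm := ⟨fun a b h => h.symm⟩
  loopless := ⟨fun a h => by
    have h2 := a.2
    simp only [disjoint_self] at h
    simp [h] at h2⟩

open SimpleGraph Finset

lemma HasC4.map {V W : Type*} {G : SimpleGraph V} {H : SimpleGraph W} (f : G.Copy H)
    (h : HasC4 G) : HasC4 H := by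
  obtain ⟨a, b, c, d, hab, hac, had, hbc, hbd, hcd, h₁, h₂, h₃, h₄⟩ := h
  exact ⟨f a, f b, f c, f d, f.injective.ne hab, f.injective.ne hac, f.injective.ne had,
    f.injective.ne hbc, f.injective.ne hbd, f.injective.ne hcd,
    f.toHom.map_adj h₁, f.toHom.map_adj h₂, f.toHom.map_adj h₃, f.toHom.map_adj h₄⟩

namespace SimpleGraph

variable {V : Type*} {G : SimpleGraph V}

lemma cliqueFree_three_iff :
    G.CliqueFree 3 ↔ ∀ a b c, G.Adj a b → G.Adj a c → ¬ G.Adj b c := by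
  classical
  refine ⟨fun h a b c hab hac hbc ↦ h {a, b, c} (is3Clique_triple_iff.2 ⟨hab, hac, hbc⟩),
    fun h t ht ↦ ?_⟩
  obtain ⟨a, b, c, hab, hac, hbc, -⟩ := is3Clique_iff.1 ht
  exact h a b c hab hac hbc

lemma eq_of_adj_of_not_hasC4 (hC : ¬ HasC4 G) {v w u u' : V} (hvw : v ≠ w)
    (hvu : G.Adj v u) (hwu : G.Adj w u) (hvu' : G.Adj v u') (hwu' : G.Adj w u') : u = u' := by
  by_contra huu'
  exact hC ⟨v, u, w, u', hvu.ne, hvw, hvu'.ne, hwu.ne', huu', hwu'.ne,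
    hvu, hwu.symm, hwu', hvu'.symm⟩

variable [Fintype V] [DecidableRel G.Adj]

lemma sum_sum_degree_neighborFinset_eq_sum_degree_sq :
    ∑ v, ∑ u ∈ G.neighborFinset v, G.degree u = ∑ u, G.degree u ^ 2 :=
  calc ∑ v, ∑ u ∈ G.neighborFinset v, G.degree u
      = ∑ u, ∑ _v ∈ G.neighborFinset u, G.degree u :=
        sum_comm' fun v u ↦ by simp [adj_comm]
    _ = ∑ u, G.degree u ^ 2 := by simp [sq]

variable [DecidableEq V]

lemma sum_degree_neighborFinset_le (hT : G.CliqueFree 3) (hC : ¬ HasC4 G) (v : V) :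
    ∑ u ∈ G.neighborFinset v, G.degree u ≤ Fintype.card V - 1 := by
  set S : V → Finset V := fun u ↦ insert u ((G.neighborFinset u).erase v)
  have hS_card : ∀ u ∈ G.neighborFinset v, #(S u) = G.degree u := by
    intro u hu
    rw [mem_neighborFinset] at hu
    rw [card_insert_of_notMem (by simp), card_erase_add_one (by simpa using hu.symm),
      card_neighborFinset_eq_degree]
  have hS_disj : (G.neighborFinset v : Set V).PairwiseDisjoint S := by
    intro u hu u' hu' huu'
    simp only [coe_neighborFinset, mem_neighborSet] at hu hu'
    have hnadj : ¬ G.Adj u u' := isIndepSet_neighborSet_of_triangleFree G hT v hu hu' huu'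
    rw [Function.onFun, Finset.disjoint_left]
    intro x hx hx'
    simp only [S, mem_insert, mem_erase, mem_neighborFinset] at hx hx'
    obtain rfl | ⟨hxv, hux⟩ := hx <;> obtain rfl | ⟨-, hux'⟩ := hx'
    · exact huu' rfl
    · exact hnadj hux'.symm
    · exact hnadj hux
    · exact huu' (eq_of_adj_of_not_hasC4 hC (Ne.symm hxv) hu hux.symm hu' hux'.symm)
  have hS_sub : (G.neighborFinset v).biUnion S ⊆ univ.erase v := by
    intro x hx
    simp only [S, mem_biUnion, mem_insert, mem_erase, mem_neighborFinset] at hx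
    obtain ⟨u, hu, rfl | ⟨hxv, -⟩⟩ := hx
    · exact mem_erase.2 ⟨hu.ne', mem_univ _⟩
    · exact mem_erase.2 ⟨hxv, mem_univ _⟩
  calc ∑ u ∈ G.neighborFinset v, G.degree u = ∑ u ∈ G.neighborFinset v, #(S u) :=
        (sum_congr rfl hS_card).symm
    _ = #((G.neighborFinset v).biUnion S) := (card_biUnion hS_disj).symm
    _ ≤ #(univ.erase v) := card_le_card hS_sub
    _ = Fintype.card V - 1 := by rw [card_erase_of_mem (mem_univ v), card_univ]

theorem sq_two_mul_card_edgeFinset_le (hT : G.CliqueFree 3) (hC : ¬ HasC4 G) :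
    (2 * #G.edgeFinset) ^ 2 ≤ Fintype.card V ^ 2 * (Fintype.card V - 1) :=
  calc (2 * #G.edgeFinset) ^ 2 = (∑ v, G.degree v) ^ 2 := by
        rw [sum_degrees_eq_twice_card_edges]
    _ ≤ Fintype.card V * ∑ v, G.degree v ^ 2 := by
        simpa using sq_sum_le_card_mul_sum_sq (s := univ) (f := fun v ↦ G.degree v)
    _ = Fintype.card V * ∑ v, ∑ u ∈ G.neighborFinset v, G.degree u := by
        rw [sum_sum_degree_neighborFinset_eq_sum_degree_sq]
    _ ≤ Fintype.card V * ∑ _v : V, (Fintype.card V - 1) := by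
        gcongr with v
        exact sum_degree_neighborFinset_le hT hC v
    _ = Fintype.card V ^ 2 * (Fintype.card V - 1) := by
        rw [sum_const, card_univ, smul_eq_mul, sq, mul_assoc]

end SimpleGraph

instance : DecidableRel petersen.Adj := fun a b ↦ inferInstanceAs (Decidable (Disjoint a.1 b.1))

lemma petersen_cliqueFree : petersen.CliqueFree 3 := cliqueFree_three_iff.2 (by decide)

lemma petersen_not_hasC4 : ¬ HasC4 petersen := by unfold HasC4; decide

lemma petersen_edgeSet_ncard : petersen.edgeSet.ncard = 15 := by
  rw [← coe_edgeFinset, Set.ncard_coe_finset]; decide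

theorem stmt16 :
    (∀ G : SimpleGraph (Fin 10), G.CliqueFree 3 → ¬ HasC4 G → G.edgeSet.ncard ≤ 15) ∧
    ∃ G : SimpleGraph (Fin 10), G.CliqueFree 3 ∧ ¬ HasC4 G ∧ G.edgeSet.ncard = 15 ∧
      Nonempty (G ≃g petersen) := by
  constructor
  · intro G hT hC
    classical
    have h := G.sq_two_mul_card_edgeFinset_le hT hC
    rw [Fintype.card_fin] at h
    rw [← coe_edgeFinset, Set.ncard_coe_finset]
    nlinarith
  · let e : Fin 10 ≃ {s : Finset (Fin 5) // s.card = 2} :=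
      (Fintype.equivFinOfCardEq (by decide)).symm
    let f : petersen.comap e ≃g petersen := Iso.comap e petersen
    refine ⟨petersen.comap e, petersen_cliqueFree.comap f.toEmbedding.isContained,
      fun h ↦ petersen_not_hasC4 (h.map f.toCopy), ?_, ⟨f⟩⟩
    rw [← petersen_edgeSet_ncard, ← Nat.card_coe_set_eq, ← Nat.card_coe_set_eq]
    exact Nat.card_congr f.mapEdgeSet
end
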